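/- Let X_1,…,X_n be independent Bernoulli random variables with parameter p ∈ (0,1], let S_n = Σ_{i=1}^n X_i, p̂ = S_n/n, and Z = 1{S_n > 0}/p̂ − 1/p (with 1{S_n>0}/p̂ = 0 when S_n = 0). If np ≥ 34, then E[Z] ≤ (2/p) · √(2/(np)) · ( √((3/2) ln(np/2)) + 1 ). -/

import Mathlib

/-!
For `s ≥ 1` one has `n / s ≤ n / (s + 1) + 3n / ((s + 1)(s + 2))`, so `E[Z]` is controlled by
the first two inverse rising moments of `S ~ Bin(n, p)`. The identity
`C(n, k) (n + 1)⋯(n + m) = C(n + m, k + m) (k + 1)⋯(k + m)` rewrites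
`E[1 / ((S + 1)⋯(S + m))]` as `1 / ((n + 1)⋯(n + m) pᵐ)` times a partial sum of the
`Bin(n + m, p)` mass function, whence `E[Z] ≤ n / ((n + 1) p) + 3n / ((n + 1)(n + 2) p²) - 1 / p
≤ 3 / (n p²)`. This is below the claimed bound as soon as `np ≥ 9 / 8`.
-/

open MeasureTheory ENNReal

noncomputable section

namespace BernoulliInvMoment

/-- The Bernoulli(p) distribution on `Bool`: `true` with probability `p`,
`false` with probability `1 − p`. -/
def bern (p : ℝ) : Measure Bool :=
  (Real.toNNReal p) • Measure.dirac true + (Real.toNNReal (1 - p)) • Measure.dirac false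

instance bern_finite (p : ℝ) : IsFiniteMeasure (bern p) := by
  unfold bern; infer_instance

/-- The distribution of `n` independent Bernoulli(p) random variables. -/
def bernData (n : ℕ) (p : ℝ) : Measure (Fin n → Bool) :=
  Measure.pi fun _ => bern p

/-- `S_n`: the number of successes. -/
def bcount (n : ℕ) (d : Fin n → Bool) : ℕ :=
  (Finset.univ.filter fun i => d i = true).card

open Finset ProbabilityTheory unitInterval

lemma bern_singleton (p : ℝ) (b : Bool) :
    bern p {b} = ENNReal.ofReal (if b then p else 1 - p) := by
  cases b <;> simp [bern, ENNReal.ofReal]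

lemma card_filter_not_eq_true {n : ℕ} (d : Fin n → Bool) :
    #{i | ¬ d i = true} = n - bcount n d := by
  rw [bcount, filter_not, card_sdiff_of_subset (filter_subset _ _), card_univ, Fintype.card_fin]

lemma bernData_singleton {n : ℕ} {p : ℝ} (hp0 : 0 ≤ p) (hp1 : p ≤ 1) (d : Fin n → Bool) :
    bernData n p {d} = ENNReal.ofReal (p ^ bcount n d * (1 - p) ^ (n - bcount n d)) := by
  rw [bernData, ← Set.univ_pi_singleton, Measure.pi_pi]
  simp_rw [bern_singleton, apply_ite ENNReal.ofReal]
  rw [prod_ite, prod_const, prod_const, card_filter_not_eq_true,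
    ENNReal.ofReal_mul (by positivity), ENNReal.ofReal_pow hp0, ENNReal.ofReal_pow (by linarith)]
  rfl

lemma card_filter_bcount_eq (n s : ℕ) : #{d : Fin n → Bool | bcount n d = s} = n.choose s := by
  rw [← card_fin n, ← card_powersetCard, card_fin]
  refine card_bij' (fun d _ => ({i | d i = true} : Finset _)) (fun t _ i => decide (i ∈ t))
    ?_ ?_ ?_ ?_
  · intro d hd
    rw [mem_filter] at hd
    exact mem_powersetCard.2 ⟨subset_univ _, hd.2⟩
  · intro t ht
    rw [mem_powersetCard] at ht
    rw [mem_filter, bcount]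
    simpa using ht.2
  · intro d _
    funext i
    simp
  · intro t _
    ext i
    simp

lemma bernData_real_singleton {n : ℕ} {p : ℝ} (hp0 : 0 ≤ p) (hp1 : p ≤ 1)
    (d : Fin n → Bool) :
    (bernData n p).real {d} = p ^ bcount n d * (1 - p) ^ (n - bcount n d) := by
  rw [measureReal_def, bernData_singleton hp0 hp1,
    ENNReal.toReal_ofReal (mul_nonneg (pow_nonneg hp0 _) (pow_nonneg (by linarith) _))]

lemma map_bcount_bernData (n : ℕ) (p : I) : (bernData n p).map (bcount n) = binomial n p := by
  have : IsFiniteMeasure (bernData n p) := by unfold bernData; infer_instance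
  refine Measure.ext_of_measureReal_singleton fun s => ?_
  have hfiber : bcount n ⁻¹' {s} = ↑({d | bcount n d = s} : Finset _) := by ext; simp
  rw [binomial_real_singleton, map_measureReal_apply (by fun_prop) (measurableSet_singleton s),
    hfiber, ← sum_measureReal_singleton, sum_congr rfl fun d hd => ?_, sum_const,
    card_filter_bcount_eq, nsmul_eq_mul, mul_assoc]
  rw [bernData_real_singleton p.2.1 p.2.2, (mem_filter.1 hd).2]

lemma integral_comp_bcount (n : ℕ) (p : I) (f : ℕ → ℝ) :
    ∫ d, f (bcount n d) ∂bernData n p = ∫ k, f k ∂binomial n p := by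
  rw [← map_bcount_bernData, integral_map (by fun_prop) (by fun_prop)]

lemma choose_mul_ascFactorial (n k m : ℕ) :
    n.choose k * (n + 1).ascFactorial m = (n + m).choose (k + m) * (k + 1).ascFactorial m := by
  rcases lt_or_ge n k with hnk | hkn
  · rw [Nat.choose_eq_zero_of_lt hnk, Nat.choose_eq_zero_of_lt (by omega), zero_mul, zero_mul]
  refine Nat.eq_of_mul_eq_mul_right (mul_pos k.factorial_pos (n - k).factorial_pos) ?_
  calc n.choose k * (n + 1).ascFactorial m * (k.factorial * (n - k).factorial)
      = (n.choose k * k.factorial * (n - k).factorial) * (n + 1).ascFactorial m := by ring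
    _ = (n + m).factorial := by
      rw [Nat.choose_mul_factorial_mul_factorial hkn, Nat.factorial_mul_ascFactorial]
    _ = (n + m).choose (k + m) * (k + m).factorial * ((n + m) - (k + m)).factorial :=
      (Nat.choose_mul_factorial_mul_factorial (by omega)).symm
    _ = _ := by rw [← Nat.factorial_mul_ascFactorial, Nat.add_sub_add_right]; ring

lemma sum_choose_add_mul_pow_le_one (n m : ℕ) (p : I) :
    ∑ k ∈ Iic n, ((n + m).choose (k + m) : ℝ) * p ^ (k + m) * (1 - p) ^ (n - k) ≤ 1 := by
  calc ∑ k ∈ Iic n, ((n + m).choose (k + m) : ℝ) * p ^ (k + m) * (1 - p) ^ (n - k)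
      = ∑ j ∈ (Iic n).map (addRightEmbedding m), (binomial (n + m) p).real {j} := by
        rw [sum_map]
        refine sum_congr rfl fun k _ => ?_
        rw [addRightEmbedding_apply, binomial_real_singleton, Nat.add_sub_add_right]
    _ ≤ 1 := by
        rw [sum_measureReal_singleton]
        exact measureReal_le_one

lemma integral_inv_ascFactorial_binomial_le (n m : ℕ) {p : I} (hp : 0 < (p : ℝ)) :
    ∫ k, (((k + 1).ascFactorial m : ℕ) : ℝ)⁻¹ ∂binomial n p
      ≤ (((n + 1).ascFactorial m : ℕ) * (p : ℝ) ^ m)⁻¹ := by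
  have hasc (j : ℕ) : (0 : ℝ) < (j + 1).ascFactorial m := mod_cast Nat.ascFactorial_pos j m
  have hterm (k : ℕ) :
      (n.choose k * (p : ℝ) ^ k * (1 - p) ^ (n - k)) • (((k + 1).ascFactorial m : ℕ) : ℝ)⁻¹
      = ((n + m).choose (k + m) * (p : ℝ) ^ (k + m) * (1 - p) ^ (n - k))
        * (((n + 1).ascFactorial m : ℕ) * (p : ℝ) ^ m)⁻¹ := by
    have h := congrArg (Nat.cast : ℕ → ℝ) (choose_mul_ascFactorial n k m)
    push_cast at h
    have := hasc k
    have := hasc n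
    rw [smul_eq_mul, pow_add]
    field_simp
    linear_combination (1 - (p : ℝ)) ^ (n - k) * h
  rw [integral_binomial, sum_congr rfl fun k _ => hterm k, ← sum_mul]
  exact mul_le_of_le_one_left (by have := hasc n; positivity) (sum_choose_add_mul_pow_le_one n m p)

lemma inv_le_inv_add_one_add_three_mul_inv {x : ℝ} (hx : 1 ≤ x) :
    x⁻¹ ≤ (x + 1)⁻¹ + 3 * ((x + 1) * (x + 2))⁻¹ := by
  rw [← sub_nonneg]
  have key : (x + 1)⁻¹ + 3 * ((x + 1) * (x + 2))⁻¹ - x⁻¹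
      = 2 * (x - 1) / (x * (x + 1) * (x + 2)) := by
    field_simp
    ring
  rw [key]
  have : 0 < x := by linarith
  apply div_nonneg <;> [linarith; positivity]

lemma integral_inv_add_one_binomial_le (n : ℕ) {p : I} (hp : 0 < (p : ℝ)) :
    ∫ k, ((k : ℝ) + 1)⁻¹ ∂binomial n p ≤ ((n + 1) * (p : ℝ))⁻¹ := by
  simpa [Nat.ascFactorial_succ] using integral_inv_ascFactorial_binomial_le n 1 hp

lemma integral_inv_add_one_mul_add_two_binomial_le (n : ℕ) {p : I} (hp : 0 < (p : ℝ)) :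
    ∫ k, (((k : ℝ) + 1) * (k + 2))⁻¹ ∂binomial n p
      ≤ ((n + 1) * (n + 2) * (p : ℝ) ^ 2)⁻¹ := by
  convert integral_inv_ascFactorial_binomial_le n 2 hp using 3 <;>
    simp [Nat.ascFactorial_succ] <;> ring

lemma ite_div_le_mul_inv_add_one_add_mul_inv (n k : ℕ) :
    (if 0 < k then (n : ℝ) / k else 0)
      ≤ n * ((k : ℝ) + 1)⁻¹ + 3 * n * (((k : ℝ) + 1) * (k + 2))⁻¹ := by
  split_ifs with hk
  · have hk1 : (1 : ℝ) ≤ k := mod_cast hk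
    calc (n : ℝ) / k = n * (k : ℝ)⁻¹ := div_eq_mul_inv _ _
      _ ≤ n * (((k : ℝ) + 1)⁻¹ + 3 * (((k : ℝ) + 1) * (k + 2))⁻¹) :=
        mul_le_mul_of_nonneg_left (inv_le_inv_add_one_add_three_mul_inv hk1) (Nat.cast_nonneg n)
      _ = _ := by ring
  · positivity

lemma integral_inv_phat_sub_inv_le (n : ℕ) {p : ℝ} (hp : 0 < p) (hp1 : p ≤ 1) :
    ∫ d, ((if 0 < bcount n d then (n : ℝ) / (bcount n d : ℝ) else 0) - 1 / p) ∂bernData n p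
      ≤ 3 / (n * p ^ 2) := by
  set q : I := ⟨p, hp.le, hp1⟩
  have hint (f : ℕ → ℝ) : Integrable f (binomial n q) := integrable_binomial f
  calc _ = ∫ k, ((if 0 < k then (n : ℝ) / k else 0) - 1 / p) ∂binomial n q :=
        integral_comp_bcount n q (fun k => (if 0 < k then (n : ℝ) / k else 0) - 1 / p)
    _ ≤ ∫ k, (n * ((k : ℝ) + 1)⁻¹ + 3 * n * (((k : ℝ) + 1) * (k + 2))⁻¹ - 1 / p)
          ∂binomial n q :=
        integral_mono (hint _) (hint _) fun k =>
          sub_le_sub_right (ite_div_le_mul_inv_add_one_add_mul_inv n k) _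
    _ = n * ∫ k, ((k : ℝ) + 1)⁻¹ ∂binomial n q
          + 3 * n * ∫ k, (((k : ℝ) + 1) * (k + 2))⁻¹ ∂binomial n q - 1 / p := by
        rw [integral_sub (hint _) (integrable_const _), integral_add (hint _) (hint _),
          integral_const_mul, integral_const_mul, integral_const, probReal_univ, one_smul]
    _ ≤ n * ((n + 1) * p)⁻¹ + 3 * n * ((n + 1) * (n + 2) * p ^ 2)⁻¹ - 1 / p := by
        gcongr
        · exact integral_inv_add_one_binomial_le n (p := q) hp
        · exact integral_inv_add_one_mul_add_two_binomial_le n (p := q) hp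
    _ ≤ 3 / (n * p ^ 2) := by
        rcases n.eq_zero_or_pos with rfl | hn
        · simp [hp.le]
        have hn1 : (1 : ℝ) ≤ n := mod_cast hn
        have h1 : (n : ℝ) * ((n + 1) * p)⁻¹ ≤ 1 / p := by
          rw [mul_inv, ← mul_assoc, one_div]
          refine mul_le_of_le_one_left (by positivity) ?_
          rw [mul_inv_le_iff₀ (by positivity)]
          linarith
        have h2 : 3 * (n : ℝ) * ((n + 1) * (n + 2) * p ^ 2)⁻¹ ≤ 3 / (n * p ^ 2) := by
          rw [← div_eq_mul_inv, div_le_div_iff₀ (by positivity) (by positivity)]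
          have : 0 < p ^ 2 := by positivity
          nlinarith
        linarith

lemma three_div_le_two_mul_sqrt_two_div {x : ℝ} (hx : 9 / 8 ≤ x) :
    3 / x ≤ 2 * √(2 / x) := by
  have hx0 : 0 < x := by linarith
  have h : 3 / (2 * x) ≤ √(2 / x) := by
    refine (Real.le_sqrt (by positivity) (by positivity)).2 ?_
    rw [div_pow, div_le_div_iff₀ (by positivity) hx0]
    nlinarith
  calc 3 / x = 2 * (3 / (2 * x)) := by field_simp
    _ ≤ 2 * √(2 / x) := by gcongr

theorem expectation_Z_refined_bound_general (n : ℕ)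
    (p : ℝ) (hp : 0 < p) (hp1 : p ≤ 1) (h34 : (34 : ℝ) ≤ (n : ℝ) * p) :
    (∫ d, ((if 0 < bcount n d then (n : ℝ) / (bcount n d : ℝ) else 0) - 1 / p)
        ∂(bernData n p)) ≤
      (2 / p) * Real.sqrt (2 / ((n : ℝ) * p)) *
        (Real.sqrt ((3 / 2) * Real.log ((n : ℝ) * p / 2)) + 1) := by
  calc _ ≤ 3 / (n * p ^ 2) := integral_inv_phat_sub_inv_le n hp hp1
    _ = p⁻¹ * (3 / (n * p)) := by field_simp
    _ ≤ p⁻¹ * (2 * √(2 / (n * p))) := by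
        gcongr
        exact three_div_le_two_mul_sqrt_two_div (by linarith)
    _ = (2 / p) * √(2 / (n * p)) * 1 := by ring
    _ ≤ _ := by
        gcongr
        exact le_add_of_nonneg_left (Real.sqrt_nonneg _)

/-- Lemma 1, second part: with `S_n = Σ X_i`, `p̂ = S_n/n` and
`Z = 1{S_n>0}/p̂ − 1/p` (so `1{S_n>0}/p̂ = n/S_n`, interpreted as `0` when `S_n = 0`),
if `np ≥ 34` then `E[Z] ≤ (2/p)·√(2/(np))·(√((3/2)·ln(np/2)) + 1)`. -/
theorem expectation_Z_refined_bound (n : ℕ) (hn : 1 ≤ n)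
    (p : ℝ) (hp : 0 < p) (hp1 : p ≤ 1) (h34 : (34 : ℝ) ≤ (n : ℝ) * p) :
    (∫ d, ((if 0 < bcount n d then (n : ℝ) / (bcount n d : ℝ) else 0) - 1 / p)
        ∂(bernData n p)) ≤
      (2 / p) * Real.sqrt (2 / ((n : ℝ) * p)) *
        (Real.sqrt ((3 / 2) * Real.log ((n : ℝ) * p / 2)) + 1) :=
  expectation_Z_refined_bound_general n p hp hp1 h34

end BernoulliInvMoment
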